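/- arXiv:1105.5215 — 2 statements merged into one kernel-verified Lean document; each statement's English description precedes it below -/
import Mathlib

section
/- Let A be a complex L × M matrix with the property that every set of at most L columns of A is linearly independent. Let Γ₁, Γ₂ ⊆ {1, …, M} with |Γ₁| ≤ L − 1 and |Γ₂| ≤ L − 1, and let S₁, S₂ be Hermitian positive definite matrices of sizes |Γ₁| × |Γ₁| and |Γ₂| × |Γ₂| respectively. If A_{Γ₁} S₁ A_{Γ₁}^H = A_{Γ₂} S₂ A_{Γ₂}^H, then Γ₁ = Γ₂ and S₁ = S₂ (where A_Γ denotes the submatrix of columns of A indexed by Γ). -/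
/-!
For `S` supported on `Γ × Γ`, `A S Aᴴ = A_Γ S_Γ A_Γᴴ`, where `A_Γ` keeps the columns in `Γ`.
When `S_Γ` is positive definite, `A_Γ S_Γ A_Γᴴ x = 0` forces `A_Γᴴ x = 0`, so the equality of
the two products gives `ker A_{Γ₂}ᴴ ⊆ ker A_{Γ₁}ᴴ`: every column of `A_{Γ₁}` lies in the span of
the columns of `A_{Γ₂}`. A column `j ∈ Γ₁ \ Γ₂` would contradict the independence of the at most
`L` columns `Γ₂ ∪ {j}`, hence `Γ₁ = Γ₂ = Γ`. Finally `A_Γ` has independent columns, so it cancels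
from `A_Γ S₁ A_Γᴴ = A_Γ S₂ A_Γᴴ` on both sides.
-/

namespace Matrix

variable {l m n p K : Type*} [Fintype n]

theorem mul_eq_submatrix_mul_submatrix {R : Type*} [NonUnitalNonAssocSemiring R]
    {A : Matrix l n R} {B : Matrix n p R} (s : Finset n)
    (h : ∀ k ∉ s, ∀ i c, A i k * B k c = 0) :
    A * B = A.submatrix id (Subtype.val : s → n) * B.submatrix (Subtype.val : s → n) id := by
  ext i c
  simp only [mul_apply, submatrix_apply, id]
  rw [Finset.sum_coe_sort s (fun k => A i k * B k c)]
  exact (Finset.sum_subset (Finset.subset_univ s) fun k _ hk => h k hk i c).symm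

theorem mul_mul_conjTranspose_eq_submatrix {R : Type*} [NonUnitalSemiring R] [StarRing R]
    (A : Matrix l n R) {S : Matrix n n R} (s : Finset n)
    (hS : ∀ i j, i ∉ s ∨ j ∉ s → S i j = 0) :
    A * S * Aᴴ = A.submatrix id (Subtype.val : s → n) *
      S.submatrix (Subtype.val : s → n) (Subtype.val : s → n) *
      (A.submatrix id (Subtype.val : s → n))ᴴ := by
  rw [mul_eq_submatrix_mul_submatrix (A := A) (B := S) s fun k hk i c => by
      rw [hS k c (.inl hk), mul_zero],
    Matrix.mul_assoc, mul_eq_submatrix_mul_submatrix (B := Aᴴ) s fun k hk i c => by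
      rw [submatrix_apply, id_eq, hS _ k (.inr hk), zero_mul],
    ← Matrix.mul_assoc, submatrix_submatrix, conjTranspose_submatrix]
  rfl

omit [Fintype n] in
theorem ext_of_submatrix_eq {R : Type*} [Zero R] {S T : Matrix n n R} {s : Finset n}
    (hS : ∀ i j, i ∉ s ∨ j ∉ s → S i j = 0) (hT : ∀ i j, i ∉ s ∨ j ∉ s → T i j = 0)
    (h : S.submatrix (Subtype.val : s → n) (Subtype.val : s → n) =
      T.submatrix (Subtype.val : s → n) (Subtype.val : s → n)) :
    S = T := by
  ext i j
  by_cases hij : i ∈ s ∧ j ∈ s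
  · exact congr_fun₂ h ⟨i, hij.1⟩ ⟨j, hij.2⟩
  · rw [not_and_or] at hij
    rw [hS i j hij, hT i j hij]

theorem PosDef.conjTranspose_mulVec_eq_zero [Fintype m] {R : Type*} [CommRing R] [PartialOrder R]
    [StarRing R] {S : Matrix n n R} (hS : S.PosDef) (B : Matrix m n R) {x : m → R}
    (hx : (B * S * Bᴴ) *ᵥ x = 0) : Bᴴ *ᵥ x = 0 := by
  by_contra hne
  have hquad : star x ⬝ᵥ (B * S * Bᴴ) *ᵥ x = star (Bᴴ *ᵥ x) ⬝ᵥ S *ᵥ (Bᴴ *ᵥ x) := by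
    rw [← mulVec_mulVec, ← mulVec_mulVec, dotProduct_mulVec, star_mulVec,
      conjTranspose_conjTranspose, dotProduct_mulVec]
  have hpos := hS.dotProduct_mulVec_pos hne
  rw [← hquad, hx, dotProduct_zero] at hpos
  exact hpos.false

theorem mul_right_injective_of_linearIndependent_col [CommSemiring K] {B : Matrix m n K}
    (hB : LinearIndependent K B.col) : Function.Injective (fun Z : Matrix n p K => B * Z) :=
  fun _ _ h => ext_col fun j => mulVec_injective_iff.2 hB congr(($h).col j)

theorem eq_of_mul_mul_conjTranspose_eq [CommRing K] [StarRing K] {B : Matrix m n K}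
    (hB : LinearIndependent K B.col) {X Y : Matrix n n K} (h : B * X * Bᴴ = B * Y * Bᴴ) :
    X = Y := by
  have hXY : (X - Y) * Bᴴ = 0 := mul_right_injective_of_linearIndependent_col hB <| by
    simp only [Matrix.sub_mul, Matrix.mul_sub, ← Matrix.mul_assoc, h, sub_self, Matrix.mul_zero]
  have hXY' : (X - Y)ᴴ = 0 := mul_right_injective_of_linearIndependent_col hB <| by
    simp only [Matrix.mul_zero]
    rw [← conjTranspose_conjTranspose B, ← conjTranspose_mul, hXY, conjTranspose_zero]
  rwa [conjTranspose_eq_zero, sub_eq_zero] at hXY'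

theorem col_mem_span_image_of_forall_conjTranspose_mulVec [Fintype m] [Field K] [StarRing K]
    (A : Matrix m n K) {s : Set n} {j : n}
    (h : ∀ x, (∀ k ∈ s, (Aᴴ *ᵥ x) k = 0) → (Aᴴ *ᵥ x) j = 0) :
    A.col j ∈ Submodule.span K (A.col '' s) := by
  classical
  let e := dotProductEquiv K m
  have hker : ⨅ k : s, LinearMap.ker (e (A.col k)) ≤ LinearMap.ker (e (A.col j)) := by
    intro x hx
    simp only [Submodule.mem_iInf, LinearMap.mem_ker, e, dotProductEquiv_apply_apply] at hx ⊢
    -- the condition in `h` is conjugate-linear in `x`; tested on `star x` it becomes linear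
    have hconj : ∀ k, (Aᴴ *ᵥ star x) k = star (A.col k ⬝ᵥ x) := fun k => by
      simp [mulVec, dotProduct, star_sum]
    simpa [hconj] using h (star x) fun k hk => by simp [hconj, hx ⟨k, hk⟩]
  have hspan := mem_span_of_iInf_ker_le_ker hker
  rw [Set.range_comp', ← Set.image_eq_range] at hspan
  exact (Submodule.apply_mem_span_image_iff_mem_span (f := e.toLinearMap) e.injective).1 hspan

theorem subset_of_mul_mul_conjTranspose_eq [Fintype m] [Field K] [PartialOrder K] [StarRing K]
    (A : Matrix m n K) {s t : Finset n} {S : Matrix s s K} {T : Matrix t t K} (hS : S.PosDef)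
    (hA : ∀ j ∈ s, LinearIndepOn K A.col (insert j (t : Set n)))
    (h : A.submatrix id (Subtype.val : s → n) * S * (A.submatrix id (Subtype.val : s → n))ᴴ =
      A.submatrix id (Subtype.val : t → n) * T * (A.submatrix id (Subtype.val : t → n))ᴴ) :
    s ⊆ t := by
  intro j hj
  by_contra hjt
  refine ((linearIndepOn_insert (Finset.mem_coe.not.2 hjt)).1 (hA j hj)).2 ?_
  refine col_mem_span_image_of_forall_conjTranspose_mulVec A fun x hx => ?_
  have hTx : (A.submatrix id (Subtype.val : t → n))ᴴ *ᵥ x = 0 := funext fun k => hx k k.2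
  have hSx := hS.conjTranspose_mulVec_eq_zero _ (x := x) <| by
    rw [h, ← mulVec_mulVec, hTx, mulVec_zero]
  exact congr_fun hSx ⟨j, hj⟩

end Matrix

open Matrix
open scoped ComplexOrder

/-- Let `A` be an `L × M` complex matrix every collection of at most `L` of
whose columns is linearly independent. For `i = 1, 2` let `Γᵢ` be a set of at most `L − 1`
column indices and let `Sᵢ` be Hermitian positive definite on `Γᵢ × Γᵢ` (here encoded as an
`M × M` matrix vanishing outside `Γᵢ × Γᵢ` whose principal `Γᵢ × Γᵢ` submatrix is positive
definite, so that `A Sᵢ Aᴴ = A_{Γᵢ} Sᵢ|_{Γᵢ} A_{Γᵢ}ᴴ`). If `A S₁ Aᴴ = A S₂ Aᴴ`, then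
`Γ₁ = Γ₂` and `S₁ = S₂`. -/
theorem stmt7 (L M : ℕ) (A : Matrix (Fin L) (Fin M) ℂ)
    (hA : ∀ t : Finset (Fin M), t.card ≤ L →
      LinearIndependent ℂ (fun j : t => fun i => A i (j : Fin M)))
    (Γ₁ Γ₂ : Finset (Fin M)) (hΓ₁ : Γ₁.card ≤ L - 1) (hΓ₂ : Γ₂.card ≤ L - 1)
    (S₁ S₂ : Matrix (Fin M) (Fin M) ℂ)
    (hS₁supp : ∀ i j, i ∉ Γ₁ ∨ j ∉ Γ₁ → S₁ i j = 0)
    (hS₂supp : ∀ i j, i ∉ Γ₂ ∨ j ∉ Γ₂ → S₂ i j = 0)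
    (hS₁ : (S₁.submatrix (fun i : Γ₁ => (i : Fin M)) (fun j : Γ₁ => (j : Fin M))).PosDef)
    (hS₂ : (S₂.submatrix (fun i : Γ₂ => (i : Fin M)) (fun j : Γ₂ => (j : Fin M))).PosDef)
    (h : A * S₁ * A.conjTranspose = A * S₂ * A.conjTranspose) :
    Γ₁ = Γ₂ ∧ S₁ = S₂ := by
  have hsub : ∀ {s t : Finset (Fin M)} {S : Matrix s s ℂ} {T : Matrix t t ℂ},
      s.card ≤ L - 1 → t.card ≤ L - 1 → S.PosDef →
      A.submatrix id (Subtype.val : s → Fin M) * S * (A.submatrix id Subtype.val)ᴴ =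
        A.submatrix id (Subtype.val : t → Fin M) * T * (A.submatrix id Subtype.val)ᴴ → s ⊆ t := by
    intro s t S T hs ht hS hST
    refine subset_of_mul_mul_conjTranspose_eq A hS (fun j hj => ?_) hST
    have hL : 1 ≤ s.card := Finset.card_pos.2 ⟨j, hj⟩
    rw [← Finset.coe_insert]
    exact hA _ ((Finset.card_insert_le j t).trans (by omega))
  rw [mul_mul_conjTranspose_eq_submatrix A Γ₁ hS₁supp,
    mul_mul_conjTranspose_eq_submatrix A Γ₂ hS₂supp] at h
  obtain rfl : Γ₁ = Γ₂ := (hsub hΓ₁ hΓ₂ hS₁ h).antisymm (hsub hΓ₂ hΓ₁ hS₂ h.symm)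
  exact ⟨rfl, ext_of_submatrix_eq hS₁supp hS₂supp
    (eq_of_mul_mul_conjTranspose_eq (hA Γ₁ (by omega)) h)⟩
end

section
/- Let Z be a complex L × L matrix of the form Z = Q Q^H for some complex L × R matrix Q, let A be a complex L × M matrix, and let Γ ⊆ {1, …, M} with A_Γ the submatrix of columns of A indexed by Γ. Then there exists a Hermitian positive semidefinite |Γ| × |Γ| matrix S with Z = A_Γ S A_Γ^H if and only if there exists a |Γ| × R matrix G with Q = A_Γ G. -/
/-! A positive semidefinite `S` factors as `S = Tᴴ T`, so `Z = A_Γ S A_Γᴴ` says `Q Qᴴ = W Wᴴ`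
with `W = A_Γ Tᴴ`. Since `range (Q Qᴴ) = range Q` (the ranks agree), this puts the columns of `Q`
in the column space of `W`, i.e. `Q = A_Γ Tᴴ G'`. Conversely `Q = A_Γ G` gives `S = G Gᴴ`. -/

open scoped ComplexOrder

namespace Matrix

variable {m n k R : Type*} [Fintype n]

theorem range_mulVecLin_mul_conjTranspose [Fintype m] [Field R] [PartialOrder R] [StarRing R]
    [StarOrderedRing R] (A : Matrix m n R) :
    LinearMap.range (A * Aᴴ).mulVecLin = LinearMap.range A.mulVecLin := by
  refine Submodule.eq_of_le_of_finrank_eq ?_ (rank_self_mul_conjTranspose A)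
  rw [mulVecLin_mul]
  exact LinearMap.range_comp_le_range _ _

theorem exists_eq_mul_of_range_mulVecLin_le [CommSemiring R] [Fintype k] {A : Matrix m n R}
    {B : Matrix m k R} (h : LinearMap.range A.mulVecLin ≤ LinearMap.range B.mulVecLin) :
    ∃ C : Matrix k n R, A = B * C := by
  classical
  have hcol (j : n) : ∃ c : k → R, B *ᵥ c = A.col j := h ⟨Pi.single j 1, by simp⟩
  choose c hc using hcol
  refine ⟨(of c)ᵀ, ?_⟩
  ext i j
  simpa [mul_apply, mulVec, dotProduct] using (congrFun (hc j) i).symm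

theorem exists_eq_mul_of_mul_conjTranspose_eq [Fintype m] [Fintype k] [Field R] [PartialOrder R]
    [StarRing R] [StarOrderedRing R] {A : Matrix m n R} {B : Matrix m k R}
    (h : A * Aᴴ = B * Bᴴ) : ∃ C : Matrix k n R, A = B * C :=
  exists_eq_mul_of_range_mulVecLin_le <| by
    rw [← range_mulVecLin_mul_conjTranspose A, h, range_mulVecLin_mul_conjTranspose B]

open scoped MatrixOrder in
theorem exists_posSemidef_mul_conjTranspose_eq_iff {𝕜 : Type*} [RCLike 𝕜] [Fintype m]
    [Fintype k] (A : Matrix m n 𝕜) (B : Matrix m k 𝕜) :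
    (∃ S : Matrix k k 𝕜, S.PosSemidef ∧ A * Aᴴ = B * S * Bᴴ) ↔ ∃ C : Matrix k n 𝕜, A = B * C := by
  classical
  constructor
  · rintro ⟨S, hS, hAS⟩
    obtain ⟨T, rfl⟩ := CStarAlgebra.nonneg_iff_eq_star_mul_self.mp hS.nonneg
    obtain ⟨C, rfl⟩ : ∃ C, A = B * Tᴴ * C := exists_eq_mul_of_mul_conjTranspose_eq <| by
      rw [hAS, conjTranspose_mul, conjTranspose_conjTranspose, star_eq_conjTranspose]
      simp only [Matrix.mul_assoc]
    exact ⟨Tᴴ * C, Matrix.mul_assoc _ _ _⟩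
  · rintro ⟨C, rfl⟩
    refine ⟨C * Cᴴ, posSemidef_self_mul_conjTranspose C, ?_⟩
    simp only [conjTranspose_mul, Matrix.mul_assoc]

end Matrix

/-- For `Z = Q Qᴴ` and a column subset `Γ` of an `L × M` matrix `A`, there is
a Hermitian positive semidefinite matrix `S` with `Z = A_Γ S A_Γᴴ` iff there is a matrix `G`
with `Q = A_Γ G`. -/
theorem stmt8 (L R M : ℕ) (Q : Matrix (Fin L) (Fin R) ℂ)
    (Z : Matrix (Fin L) (Fin L) ℂ) (hZ : Z = Q * Q.conjTranspose)
    (A : Matrix (Fin L) (Fin M) ℂ) (Γ : Finset (Fin M)) :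
    (∃ S : Matrix Γ Γ ℂ, S.PosSemidef ∧
        Z = (Matrix.of fun i (j : Γ) => A i (j : Fin M)) * S *
          (Matrix.of fun i (j : Γ) => A i (j : Fin M)).conjTranspose) ↔
      (∃ G : Matrix Γ (Fin R) ℂ,
        Q = (Matrix.of fun i (j : Γ) => A i (j : Fin M)) * G) := by
  subst hZ
  exact Matrix.exists_posSemidef_mul_conjTranspose_eq_iff Q _
end
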